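/- arXiv:1312.6803 — 5 statements merged into one kernel-verified Lean document; each statement's English description precedes it below -/
import Mathlib

section
/- Let μ and ν be Lie brackets on ℝⁿ (alternating bilinear maps ℝⁿ × ℝⁿ → ℝⁿ satisfying the Jacobi identity), and suppose ν lies in the closure of the GL(n,ℝ)-orbit {T.μ : T ∈ GL(n,ℝ)} of μ in the finite-dimensional vector space of alternating bilinear maps ℝⁿ × ℝⁿ → ℝⁿ, where (T.μ)(X,Y) = T⁻¹ μ(TX, TY). If the Lie algebra (ℝⁿ, ν) admits an inner product of negative Ricci curvature, then so does the Lie algebra (ℝⁿ, μ). -/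
open scoped BigOperators

/-- `B` is an inner product: a symmetric, positive-definite bilinear form. -/
def IsInnerProduct {V : Type*} [AddCommGroup V] [Module ℝ V]
    (B : LinearMap.BilinForm ℝ V) : Prop :=
  (∀ x y : V, B x y = B y x) ∧ (∀ x : V, x ≠ 0 → 0 < B x x)

/-- The basis `E` is orthonormal with respect to the bilinear form `B`. -/
def IsOrthonormalBasis {V : Type*} [AddCommGroup V] [Module ℝ V] {ι : Type*}
    (B : LinearMap.BilinForm ℝ V) (E : Module.Basis ι ℝ V) : Prop :=
  (∀ i, B (E i) (E i) = 1) ∧ ∀ i j, i ≠ j → B (E i) (E j) = 0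

/-- `μ` is a Lie bracket on `ℝⁿ`: an alternating bilinear map satisfying the Jacobi identity. -/
def IsLieBracketMap {n : ℕ}
    (μ : (Fin n → ℝ) →ₗ[ℝ] (Fin n → ℝ) →ₗ[ℝ] (Fin n → ℝ)) : Prop :=
  (∀ x, μ x x = 0) ∧
    (∀ x y z, μ (μ x y) z + μ (μ y z) x + μ (μ z x) y = 0)

/-- The Ricci form of the Lie algebra `(ℝⁿ, μ)` with inner product `B`, computed using the
orthonormal basis `E` and the mean curvature vector `H`. -/
noncomputable def brRicForm {n : ℕ}
    (μ : (Fin n → ℝ) →ₗ[ℝ] (Fin n → ℝ) →ₗ[ℝ] (Fin n → ℝ))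
    (B : LinearMap.BilinForm ℝ (Fin n → ℝ)) {ι : Type*} [Fintype ι]
    (E : Module.Basis ι ℝ (Fin n → ℝ)) (H X : Fin n → ℝ) : ℝ :=
  - B (μ H X) X - (1/2) * LinearMap.trace ℝ (Fin n → ℝ) ((μ X) ∘ₗ (μ X))
    - (1/2) * ∑ i, B (μ X (E i)) (μ X (E i))
    + (1/4) * ∑ i, ∑ j, (B (μ (E i) (E j)) X)^2

/-- The Lie algebra `(ℝⁿ, μ)` admits an inner product of negative Ricci curvature. -/
def BrHasNegRicci {n : ℕ}
    (μ : (Fin n → ℝ) →ₗ[ℝ] (Fin n → ℝ) →ₗ[ℝ] (Fin n → ℝ)) : Prop :=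
  ∃ B : LinearMap.BilinForm ℝ (Fin n → ℝ), IsInnerProduct B ∧
    ∀ {ι : Type} [Fintype ι] (E : Module.Basis ι ℝ (Fin n → ℝ)), IsOrthonormalBasis B E →
      ∀ H : Fin n → ℝ, (∀ X, B H X = LinearMap.trace ℝ (Fin n → ℝ) (μ X)) →
        ∀ X, X ≠ 0 → brRicForm μ B E H X < 0

/-! Fix an inner product `B` of negative Ricci curvature for `ν` and a `B`-orthonormal basis.
The Ricci form is then a continuous function of the bracket and of `X`, homogeneous of degree two
in `X`, so by compactness of the unit sphere it stays negative for every bracket close to `ν`.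
As the orbit closure lives in the space of all maps `ℝⁿ → ℝⁿ → ℝⁿ`, "close" is measured on the
bilinear extension of the values on pairs of basis vectors. Some `T.μ` is that close, and the
Ricci form of `(T.μ, B)` at `T⁻¹X` is the Ricci form of `(μ, B(T⁻¹·, T⁻¹·))` at `X`. -/

open LinearMap Module Filter Topology

section InnerProduct

variable {V : Type*} [AddCommGroup V] [Module ℝ V] {B : LinearMap.BilinForm ℝ V}

lemma IsInnerProduct.nondegenerate (hB : IsInnerProduct B) : B.Nondegenerate := by
  constructor <;> intro m hm <;> by_contra h <;> exact (hB.2 m h).ne' (hm m)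

lemma IsInnerProduct.eq_of_forall_apply_eq (hB : IsInnerProduct B) {u v : V}
    (h : ∀ X, B u X = B v X) : u = v :=
  sub_eq_zero.mp <| hB.nondegenerate.1 _ fun X => by simp [h X]

lemma IsInnerProduct.exists_isOrthonormalBasis [FiniteDimensional ℝ V] (hB : IsInnerProduct B) :
    ∃ E : Basis (Fin (finrank ℝ V)) ℝ V, IsOrthonormalBasis B E := by
  have : Invertible (2 : ℝ) := invertibleOfNonzero two_ne_zero
  obtain ⟨v, hv⟩ := LinearMap.BilinForm.exists_orthogonal_basis
    (LinearMap.BilinForm.isSymm_iff.mp (LinearMap.BilinForm.isSymm_def.mpr hB.1))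
  have hpos : ∀ i, 0 < B (v i) (v i) := fun i => hB.2 _ (v.ne_zero i)
  let w : Fin (finrank ℝ V) → ℝˣ := fun i =>
    Units.mk0 (√(B (v i) (v i)))⁻¹ (inv_ne_zero (Real.sqrt_ne_zero'.mpr (hpos i)))
  refine ⟨v.unitsSMul w, fun i => ?_, fun i j hij => ?_⟩
  · have : (√(B (v i) (v i)))⁻¹ ^ 2 * B (v i) (v i) = 1 := by
      rw [inv_pow, Real.sq_sqrt (hpos i).le, inv_mul_cancel₀ (hpos i).ne']
    simpa [w, Module.Basis.unitsSMul_apply, Units.smul_def, ← mul_assoc, sq] using this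
  · simp [Module.Basis.unitsSMul_apply, Units.smul_def, hv hij]

variable {ι κ : Type*} [Fintype ι] [Fintype κ] {E : Basis ι ℝ V}

namespace IsOrthonormalBasis

lemma repr_apply (hE : IsOrthonormalBasis B E) (v : V) (i : ι) : E.repr v i = B v (E i) := by
  classical
  conv_rhs => rw [← E.sum_repr v]
  rw [map_sum, LinearMap.sum_apply, Finset.sum_eq_single i]
  · simp [hE.1 i]
  · intro j _ hj
    simp [hE.2 j i hj]
  · simp

lemma trace_eq_sum (hE : IsOrthonormalBasis B E) (M : V →ₗ[ℝ] V) :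
    trace ℝ V M = ∑ i, B (M (E i)) (E i) := by
  classical
  rw [trace_eq_matrix_trace ℝ E, Matrix.trace]
  exact Finset.sum_congr rfl fun i _ => by rw [Matrix.diag_apply, toMatrix_apply, hE.repr_apply]

lemma sum_apply_self_eq_trace [FiniteDimensional ℝ V] (hB : IsInnerProduct B)
    (hE : IsOrthonormalBasis B E) (Q : LinearMap.BilinForm ℝ V) :
    ∑ i, Q (E i) (E i) = trace ℝ V (Q.symmCompOfNondegenerate B hB.nondegenerate) := by
  rw [hE.trace_eq_sum]
  simp only [LinearMap.BilinForm.symmCompOfNondegenerate_left_apply]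

lemma sum_apply_self_eq (hB : IsInnerProduct B) (hE : IsOrthonormalBasis B E) {F : Basis κ ℝ V}
    (hF : IsOrthonormalBasis B F) (Q : LinearMap.BilinForm ℝ V) :
    ∑ i, Q (E i) (E i) = ∑ j, Q (F j) (F j) := by
  have := Module.Finite.of_basis E
  rw [hE.sum_apply_self_eq_trace hB, hF.sum_apply_self_eq_trace hB]

lemma sum_sq_eq (hB : IsInnerProduct B) (hE : IsOrthonormalBasis B E) {F : Basis κ ℝ V}
    (hF : IsOrthonormalBasis B F) (φ : V →ₗ[ℝ] ℝ) :
    ∑ i, φ (E i) ^ 2 = ∑ j, φ (F j) ^ 2 := by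
  simpa [sq] using hE.sum_apply_self_eq hB hF ((LinearMap.mul ℝ ℝ).compl₁₂ φ φ)

end IsOrthonormalBasis

end InnerProduct

section BilinExtend

variable {ι α M : Type*} [Fintype ι] [DecidableEq ι] [AddCommGroup M] [Module ℝ M]

noncomputable def bilinExtend (f : (ι → ℝ) → (ι → ℝ) → M) : (ι → ℝ) →ₗ[ℝ] (ι → ℝ) →ₗ[ℝ] M :=
  (Pi.basisFun ℝ ι).constr ℝ fun i => (Pi.basisFun ℝ ι).constr ℝ fun j =>
    f (Pi.single i 1) (Pi.single j 1)

lemma bilinExtend_apply (f : (ι → ℝ) → (ι → ℝ) → M) (x y : ι → ℝ) :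
    bilinExtend f x y = ∑ i, ∑ j, (x i * y j) • f (Pi.single i 1) (Pi.single j 1) := by
  simp [bilinExtend, Module.Basis.constr_apply_fintype, Finset.smul_sum, mul_smul]

@[simp]
lemma bilinExtend_coe (g : (ι → ℝ) →ₗ[ℝ] (ι → ℝ) →ₗ[ℝ] M) : bilinExtend (fun x y => g x y) = g :=
  (Pi.basisFun ℝ ι).ext fun i => (Pi.basisFun ℝ ι).ext fun j => by
    simp [bilinExtend]

@[fun_prop]
lemma Continuous.bilinExtend [TopologicalSpace α] [TopologicalSpace M] [IsTopologicalAddGroup M]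
    [ContinuousSMul ℝ M] {f : α → (ι → ℝ) → (ι → ℝ) → M} {x y : α → ι → ℝ}
    (hf : Continuous f) (hx : Continuous x) (hy : Continuous y) :
    Continuous fun a => bilinExtend (f a) (x a) (y a) := by
  simp only [bilinExtend_apply]
  fun_prop

end BilinExtend

@[fun_prop]
lemma Continuous.bilinForm_apply {α V : Type*} [TopologicalSpace α] [NormedAddCommGroup V]
    [NormedSpace ℝ V] [FiniteDimensional ℝ V] (B : LinearMap.BilinForm ℝ V) {x y : α → V}
    (hx : Continuous x) (hy : Continuous y) : Continuous fun a => B (x a) (y a) :=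
  B.toContinuousBilinearMap.continuous₂.comp₂ hx hy

lemma eventually_forall_ne_zero_neg_of_homogeneous {α E : Type*} [TopologicalSpace α]
    [NormedAddCommGroup E] [NormedSpace ℝ E] [ProperSpace E] {F : α → E → ℝ}
    (hF : Continuous (Function.uncurry F)) (hsmul : ∀ a (t : ℝ) x, F a (t • x) = t ^ 2 * F a x)
    {a₀ : α} (h₀ : ∀ x ≠ 0, F a₀ x < 0) : ∀ᶠ a in 𝓝 a₀, ∀ x ≠ 0, F a x < 0 := by
  have hsphere : ∀ᶠ a in 𝓝 a₀, ∀ x ∈ Metric.sphere (0 : E) 1, F a x < 0 :=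
    (isCompact_sphere 0 1).eventually_forall_of_forall_eventually fun x hx =>
      (hF.tendsto (a₀, x)).eventually <| eventually_lt_nhds <|
        h₀ x (ne_zero_of_mem_unit_sphere ⟨x, hx⟩)
  refine hsphere.mono fun a ha x hx => ?_
  have hx' : ‖x‖ ≠ 0 := norm_ne_zero_iff.mpr hx
  calc F a x = ‖x‖ ^ 2 * F a (‖x‖⁻¹ • x) := by
        rw [hsmul, ← mul_assoc, ← mul_pow, mul_inv_cancel₀ hx', one_pow, one_mul]
    _ < 0 := mul_neg_of_pos_of_neg (pow_pos (norm_pos_iff.mpr hx) 2)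
        (ha _ (by simp [norm_smul, hx']))

section Ricci

variable {n : ℕ} {B : LinearMap.BilinForm ℝ (Fin n → ℝ)}

local notation "V" => Fin n → ℝ

noncomputable def meanCurvature {ι : Type*} [Fintype ι] (E : Basis ι ℝ V)
    (μ : V →ₗ[ℝ] V →ₗ[ℝ] V) : V :=
  ∑ k, trace ℝ V (μ (E k)) • E k

lemma IsOrthonormalBasis.apply_meanCurvature {ι : Type*} [Fintype ι] {E : Basis ι ℝ V}
    (hB : IsInnerProduct B) (hE : IsOrthonormalBasis B E) (μ : V →ₗ[ℝ] V →ₗ[ℝ] V) (X : V) :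
    B (meanCurvature E μ) X = trace ℝ V (μ X) := by
  conv_rhs => rw [← E.sum_repr X]
  simp [meanCurvature, hE.repr_apply, hB.1 X, mul_comm]

lemma brRicForm_smul (μ : V →ₗ[ℝ] V →ₗ[ℝ] V) {ι : Type*} [Fintype ι] (E : Basis ι ℝ V)
    (H X : V) (t : ℝ) : brRicForm μ B E H (t • X) = t ^ 2 * brRicForm μ B E H X := by
  simp only [brRicForm, map_smul, LinearMap.smul_apply, smul_eq_mul, LinearMap.smul_comp,
    LinearMap.comp_smul, mul_pow, ← mul_assoc, ← pow_two, ← Finset.mul_sum]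
  ring

lemma brRicForm_eq_of_isOrthonormalBasis (hB : IsInnerProduct B) {ι κ : Type*} [Fintype ι]
    [Fintype κ] {E : Basis ι ℝ V} {F : Basis κ ℝ V} (hE : IsOrthonormalBasis B E)
    (hF : IsOrthonormalBasis B F) (μ : V →ₗ[ℝ] V →ₗ[ℝ] V) (H X : V) :
    brRicForm μ B E H X = brRicForm μ B F H X := by
  have hsq : ∑ i, ∑ j, (B (μ (E i) (E j)) X) ^ 2 = ∑ i, ∑ j, (B (μ (F i) (F j)) X) ^ 2 :=
    calc ∑ i, ∑ j, (B (μ (E i) (E j)) X) ^ 2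
        = ∑ i, ∑ j, (B (μ (E i) (F j)) X) ^ 2 := Finset.sum_congr rfl fun i _ =>
          hE.sum_sq_eq hB hF ((B.flip X) ∘ₗ μ (E i))
      _ = ∑ j, ∑ i, (B (μ (E i) (F j)) X) ^ 2 := Finset.sum_comm
      _ = ∑ j, ∑ i, (B (μ (F i) (F j)) X) ^ 2 := Finset.sum_congr rfl fun j _ =>
          hE.sum_sq_eq hB hF ((B.flip X) ∘ₗ μ.flip (F j))
      _ = ∑ i, ∑ j, (B (μ (F i) (F j)) X) ^ 2 := Finset.sum_comm
  have hnorm := hE.sum_apply_self_eq hB hF (B.compl₁₂ (μ X) (μ X))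
  simp only [compl₁₂_apply] at hnorm
  rw [brRicForm, brRicForm, hsq, hnorm]

lemma IsInnerProduct.brHasNegRicci_of_isOrthonormalBasis {μ : V →ₗ[ℝ] V →ₗ[ℝ] V}
    (hB : IsInnerProduct B) {ι : Type*} [Fintype ι] {E : Basis ι ℝ V}
    (hE : IsOrthonormalBasis B E) (hneg : ∀ X ≠ 0, brRicForm μ B E (meanCurvature E μ) X < 0) :
    BrHasNegRicci μ := by
  refine ⟨B, hB, fun F hF H hH X hX => ?_⟩
  have hH : H = meanCurvature E μ :=
    hB.eq_of_forall_apply_eq fun Y => by rw [hH, hE.apply_meanCurvature hB]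
  rw [hH, brRicForm_eq_of_isOrthonormalBasis hB hF hE]
  exact hneg X hX

lemma IsOrthonormalBasis.continuous_brRicForm_bilinExtend {ι : Type*} [Fintype ι]
    {E : Basis ι ℝ V} (hE : IsOrthonormalBasis B E) :
    Continuous (Function.uncurry fun (f : V → V → V) X =>
      brRicForm (bilinExtend f) B E (meanCurvature E (bilinExtend f)) X) := by
  simp only [Function.uncurry_def, brRicForm, meanCurvature, hE.trace_eq_sum, comp_apply]
  fun_prop

end Ricci

section Congr

variable {V W : Type*} [AddCommGroup V] [Module ℝ V] [AddCommGroup W] [Module ℝ W]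
  {B : LinearMap.BilinForm ℝ V}

lemma IsInnerProduct.congr (hB : IsInnerProduct B) (e : V ≃ₗ[ℝ] W) :
    IsInnerProduct (B.congr e) :=
  ⟨fun _ _ => hB.1 _ _, fun _ hx => hB.2 _ (e.symm.map_ne_zero_iff.mpr hx)⟩

lemma IsOrthonormalBasis.map_symm_of_congr {ι : Type*} {E : Basis ι ℝ W} (e : V ≃ₗ[ℝ] W)
    (hE : IsOrthonormalBasis (B.congr e) E) : IsOrthonormalBasis B (E.map e.symm) :=
  ⟨hE.1, hE.2⟩

end Congr

section Conj

variable {n : ℕ}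

local notation "V" => Fin n → ℝ

noncomputable def conjBracket (μ : V →ₗ[ℝ] V →ₗ[ℝ] V) (T : V ≃ₗ[ℝ] V) : V →ₗ[ℝ] V →ₗ[ℝ] V :=
  (μ.compl₁₂ T.toLinearMap T.toLinearMap).compr₂ T.symm.toLinearMap

@[simp]
lemma conjBracket_apply (μ : V →ₗ[ℝ] V →ₗ[ℝ] V) (T : V ≃ₗ[ℝ] V) (x y : V) :
    conjBracket μ T x y = T.symm (μ (T x) (T y)) := rfl

lemma conjBracket_eq_conj (μ : V →ₗ[ℝ] V →ₗ[ℝ] V) (T : V ≃ₗ[ℝ] V) (X : V) :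
    conjBracket μ T X = T.symm.conj (μ (T X)) := by
  ext
  simp [LinearEquiv.conj_apply]

lemma brRicForm_congr (B : LinearMap.BilinForm ℝ V) (μ : V →ₗ[ℝ] V →ₗ[ℝ] V) (T : V ≃ₗ[ℝ] V)
    {ι : Type*} [Fintype ι] (E : Basis ι ℝ V) (H X : V) :
    brRicForm μ (B.congr T) E H X =
      brRicForm (conjBracket μ T) B (E.map T.symm) (T.symm H) (T.symm X) := by
  have htrace : trace ℝ V (conjBracket μ T (T.symm X) ∘ₗ conjBracket μ T (T.symm X)) =
      trace ℝ V (μ X ∘ₗ μ X) := by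
    rw [conjBracket_eq_conj, T.apply_symm_apply, ← LinearEquiv.conj_comp, trace_conj']
  simp [brRicForm, htrace, LinearMap.BilinForm.congr_apply]

lemma BrHasNegRicci.of_conjBracket {μ : V →ₗ[ℝ] V →ₗ[ℝ] V} {T : V ≃ₗ[ℝ] V}
    (h : BrHasNegRicci (conjBracket μ T)) : BrHasNegRicci μ := by
  obtain ⟨B, hB, hneg⟩ := h
  refine ⟨B.congr T, hB.congr T, fun E hE H hH X hX => ?_⟩
  have hH' : ∀ Y, B (T.symm H) Y = trace ℝ V (conjBracket μ T Y) := fun Y => by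
    simpa [conjBracket_eq_conj, trace_conj', LinearMap.BilinForm.congr_apply] using hH (T Y)
  rw [brRicForm_congr]
  exact hneg _ (hE.map_symm_of_congr T) _ hH' _ (T.symm.map_ne_zero_iff.mpr hX)

end Conj

theorem brHasNegRicci_of_orbit_closure_general (n : ℕ)
    (μ ν : (Fin n → ℝ) →ₗ[ℝ] (Fin n → ℝ) →ₗ[ℝ] (Fin n → ℝ))
    (hclo : (fun x y => ν x y) ∈
      closure {f : (Fin n → ℝ) → (Fin n → ℝ) → (Fin n → ℝ) |
        ∃ T : (Fin n → ℝ) ≃ₗ[ℝ] (Fin n → ℝ), f = fun x y => T.symm (μ (T x) (T y))})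
    (hneg : BrHasNegRicci ν) :
    BrHasNegRicci μ := by
  obtain ⟨B, hB, hν⟩ := hneg
  obtain ⟨E, hE⟩ := hB.exists_isOrthonormalBasis
  have hν' : ∀ X ≠ 0, brRicForm (bilinExtend fun x y => ν x y) B E
      (meanCurvature E (bilinExtend fun x y => ν x y)) X < 0 := fun X hX => by
    simpa using hν E hE _ (hE.apply_meanCurvature hB ν) X hX
  obtain ⟨_, ⟨T, rfl⟩, hT⟩ := ((mem_closure_iff_frequently.mp hclo).and_eventually
    (eventually_forall_ne_zero_neg_of_homogeneous hE.continuous_brRicForm_bilinExtend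
      (fun f t X => brRicForm_smul _ E _ X t) hν')).exists
  rw [show (fun x y => T.symm (μ (T x) (T y))) = fun x y => conjBracket μ T x y from rfl,
    bilinExtend_coe] at hT
  exact (hB.brHasNegRicci_of_isOrthonormalBasis hE hT).of_conjBracket

/-- If a Lie bracket `ν` on `ℝⁿ` lies in the closure of the `GL(n,ℝ)`-orbit
`{T.μ}` of a Lie bracket `μ`, where `(T.μ)(X,Y) = T⁻¹ μ(TX, TY)`, and `(ℝⁿ, ν)` admits an
inner product of negative Ricci curvature, then so does `(ℝⁿ, μ)`. -/
theorem brHasNegRicci_of_orbit_closure (n : ℕ)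
    (μ ν : (Fin n → ℝ) →ₗ[ℝ] (Fin n → ℝ) →ₗ[ℝ] (Fin n → ℝ))
    (hμ : IsLieBracketMap μ) (hν : IsLieBracketMap ν)
    (hclo : (fun x y => ν x y) ∈
      closure {f : (Fin n → ℝ) → (Fin n → ℝ) → (Fin n → ℝ) |
        ∃ T : (Fin n → ℝ) ≃ₗ[ℝ] (Fin n → ℝ), f = fun x y => T.symm (μ (T x) (T y))})
    (hneg : BrHasNegRicci ν) :
    BrHasNegRicci μ :=
  brHasNegRicci_of_orbit_closure_general n μ ν hclo hneg
end

section
/- Let p ≥ 1 and let D be a derivation of the Heisenberg Lie algebra h_{2p+1} such that D(Z) = λ·Z with λ > 0. Let V_− ⊆ (h_{2p+1})^ℂ be the sum of the generalized eigenspaces of the complexification of D corresponding to eigenvalues with negative real part, and let m_− = V_− ∩ h_{2p+1}. Then [U, V] = 0 for all U, V ∈ V_−; in particular [X, Y] = 0 for all X, Y ∈ m_−. -/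
open scoped TensorProduct

/-!
The derived algebra of `h_{2p+1}` is `ℝ Z`, on which `D` acts by `λ`; with the Leibniz rule this
gives `⁅D U, W⁆ + ⁅U, D W⁆ = λ ⁅U, W⁆` on the complexification, i.e.
`(λ - μ - ν) ⁅U, W⁆ = ⁅(D - μ) U, W⁆ + ⁅U, (D - ν) W⁆`. Induction on the nilpotency orders then
kills `⁅U, W⁆` for generalized eigenvectors of eigenvalues `μ`, `ν` with `μ + ν ≠ λ`, which is
always the case when `Re μ, Re ν < 0 < λ`.
-/

theorem lie_mem_of_span_eq_top {R L : Type*} [CommRing R] [LieRing L] [LieAlgebra R L]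
    {ι : Type*} {v : ι → L} (hv : Submodule.span R (Set.range v) = ⊤) {S : Submodule R L}
    (hS : ∀ i j, ⁅v i, v j⁆ ∈ S) (x y : L) : ⁅x, y⁆ ∈ S := by
  have hxy : ⁅x, y⁆ ∈ Submodule.map₂ (LieModule.toEnd R L L : L →ₗ[R] Module.End R L) ⊤ ⊤ :=
    Submodule.apply_mem_map₂ _ trivial trivial
  rw [← hv, Submodule.map₂_span_span] at hxy
  refine Submodule.span_le.mpr ?_ hxy
  rintro _ ⟨_, ⟨i, rfl⟩, _, ⟨j, rfl⟩, rfl⟩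
  exact hS i j

theorem heisenberg_lie_mem_span_center {R L : Type*} [CommRing R] [LieRing L] [LieAlgebra R L]
    {p : ℕ} {Xb : Fin (2 * p) → L} {Zb : L}
    (hspan : Submodule.span R (Set.range (Sum.elim Xb (fun _ : Unit => Zb))) = ⊤)
    (hbr : ∀ i j : Fin (2 * p), ⁅Xb i, Xb j⁆ =
      if (j : ℕ) = (i : ℕ) + p then Zb else if (i : ℕ) = (j : ℕ) + p then -Zb else 0)
    (hXZ : ∀ i, ⁅Xb i, Zb⁆ = 0) (x y : L) : ⁅x, y⁆ ∈ Submodule.span R {Zb} := by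
  refine lie_mem_of_span_eq_top hspan ?_ x y
  have hZ := Submodule.mem_span_singleton_self (R := R) Zb
  rintro (i | _) (j | _)
  · rw [Sum.elim_inl, Sum.elim_inl, hbr]
    split_ifs
    exacts [hZ, Submodule.neg_mem _ hZ, Submodule.zero_mem _]
  · simp [hXZ]
  · simp [← lie_skew Zb, hXZ]
  · simp

theorem LinearMap.baseChange_lie_eq_smul_of_lie_eq_smul {R A L : Type*} [CommRing R] [CommRing A]
    [Algebra R A] [LieRing L] [LieAlgebra R L] {f : Module.End R L} {c : R}
    (hf : ∀ x y : L, f ⁅x, y⁆ = c • ⁅x, y⁆) (U W : A ⊗[R] L) :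
    f.baseChange A ⁅U, W⁆ = c • ⁅U, W⁆ := by
  induction U using TensorProduct.induction_on with
  | zero => simp
  | add U₁ U₂ h₁ h₂ => rw [add_lie, map_add, h₁, h₂, smul_add]
  | tmul a x =>
    induction W using TensorProduct.induction_on with
    | zero => simp
    | add W₁ W₂ h₁ h₂ => rw [lie_add, map_add, h₁, h₂, smul_add]
    | tmul b y =>
      rw [LieAlgebra.ExtendScalars.bracket_tmul, LinearMap.baseChange_tmul, hf,
        TensorProduct.tmul_smul]

theorem LieDerivation.baseChange_apply_lie {R A L : Type*} [CommRing R] [CommRing A] [Algebra R A]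
    [LieRing L] [LieAlgebra R L] (D : LieDerivation R L L) (U W : A ⊗[R] L) :
    D.toLinearMap.baseChange A ⁅U, W⁆ =
      ⁅D.toLinearMap.baseChange A U, W⁆ + ⁅U, D.toLinearMap.baseChange A W⁆ := by
  simpa only [Lie.Derivation.ofLieDerivation_apply, ← LinearMap.baseChange_eq_ltensor,
    add_comm] using (Lie.Derivation.ofLieDerivation A D).apply_lie_eq_add U W

section

variable {K M : Type*} [Field K] [LieRing M] [LieAlgebra K M] {D : Module.End K M} {c : K}

theorem lie_eq_zero_of_mem_maxGenEigenspace
    (hD : ∀ U W : M, ⁅D U, W⁆ + ⁅U, D W⁆ = c • ⁅U, W⁆) {μ ν : K} (hμν : μ + ν ≠ c) {U W : M}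
    (hU : U ∈ D.maxGenEigenspace μ) (hW : W ∈ D.maxGenEigenspace ν) : ⁅U, W⁆ = 0 := by
  have hshift : ∀ U W : M,
      ⁅(D - μ • 1) U, W⁆ + ⁅U, (D - ν • 1) W⁆ = (c - μ - ν) • ⁅U, W⁆ := by
    intro U W
    simp only [LinearMap.sub_apply, LinearMap.smul_apply, Module.End.one_apply, sub_lie,
      lie_sub, smul_lie, lie_smul, sub_smul, ← hD U W]
    abel
  have hcμν : c - μ - ν ≠ 0 := by
    rw [sub_sub, sub_ne_zero]; exact hμν.symm
  obtain ⟨m, hm⟩ := (Module.End.mem_maxGenEigenspace _ _ _).mp hU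
  obtain ⟨n, hn⟩ := (Module.End.mem_maxGenEigenspace _ _ _).mp hW
  clear hU hW
  induction m generalizing U n W with
  | zero => simp_all
  | succ m ihm =>
    induction n generalizing W with
    | zero => simp_all
    | succ n ihn =>
      have hU' : ((D - μ • 1) ^ m) ((D - μ • 1) U) = 0 := by
        rwa [← Module.End.mul_apply, ← pow_succ]
      have hW' : ((D - ν • 1) ^ n) ((D - ν • 1) W) = 0 := by
        rwa [← Module.End.mul_apply, ← pow_succ]
      have h := hshift U W
      rw [ihm hU' _ hn, ihn hW', add_zero] at h
      exact (smul_eq_zero.mp h.symm).resolve_left hcμν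

theorem lie_eq_zero_of_mem_iSup_maxGenEigenspace
    (hD : ∀ U W : M, ⁅D U, W⁆ + ⁅U, D W⁆ = c • ⁅U, W⁆) {P : K → Prop}
    (hP : ∀ μ ν, P μ → P ν → μ + ν ≠ c) {U W : M}
    (hU : U ∈ ⨆ μ : {μ // P μ}, D.maxGenEigenspace μ)
    (hW : W ∈ ⨆ μ : {μ // P μ}, D.maxGenEigenspace μ) : ⁅U, W⁆ = 0 := by
  induction hU using Submodule.iSup_induction' with
  | mem μ U hU =>
    induction hW using Submodule.iSup_induction' with
    | mem ν W hW => exact lie_eq_zero_of_mem_maxGenEigenspace hD (hP _ _ μ.2 ν.2) hU hW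
    | zero => exact lie_zero U
    | add W₁ _ W₂ _ h₁ h₂ => rw [lie_add, h₁, h₂, add_zero]
  | zero => exact zero_lie W
  | add U₁ _ U₂ _ h₁ h₂ => rw [add_lie, h₁, h₂, add_zero]

end

theorem heisenberg_neg_part_abelian_general
    (L : Type*) [LieRing L] [LieAlgebra ℝ L]
    (p : ℕ) (Xb : Fin (2 * p) → L) (Zb : L)
    (hspan : Submodule.span ℝ (Set.range (Sum.elim Xb (fun _ : Unit => Zb))) = ⊤)
    (hbr : ∀ i j : Fin (2 * p), ⁅Xb i, Xb j⁆ =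
      if (j : ℕ) = (i : ℕ) + p then Zb else if (i : ℕ) = (j : ℕ) + p then -Zb else 0)
    (hXZ : ∀ i, ⁅Xb i, Zb⁆ = 0)
    (D : LieDerivation ℝ L L) (lam : ℝ) (hDZ : D Zb = lam • Zb) (hlam : 0 < lam)
    (Vneg : Submodule ℂ (ℂ ⊗[ℝ] L))
    (hVneg : Vneg = ⨆ μ : {μ : ℂ // μ.re < 0},
      Module.End.maxGenEigenspace (LinearMap.baseChange ℂ D.toLinearMap) μ.1) :
    (∀ U ∈ Vneg, ∀ W ∈ Vneg, ⁅U, W⁆ = 0) ∧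
      (∀ x y : L, (1 : ℂ) ⊗ₜ[ℝ] x ∈ Vneg → (1 : ℂ) ⊗ₜ[ℝ] y ∈ Vneg → ⁅x, y⁆ = 0) := by
  have hD : ∀ x y : L, D ⁅x, y⁆ = lam • ⁅x, y⁆ := fun x y => by
    obtain ⟨c, hc⟩ := Submodule.mem_span_singleton.mp
      (heisenberg_lie_mem_span_center hspan hbr hXZ x y)
    rw [← hc, map_smul, hDZ, smul_comm]
  have hDC : ∀ U W : ℂ ⊗[ℝ] L, ⁅D.toLinearMap.baseChange ℂ U, W⁆ +
      ⁅U, D.toLinearMap.baseChange ℂ W⁆ = (lam : ℂ) • ⁅U, W⁆ := fun U W => by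
    rw [← D.baseChange_apply_lie, Complex.coe_smul]
    exact LinearMap.baseChange_lie_eq_smul_of_lie_eq_smul hD U W
  have hVneg_abelian : ∀ U ∈ Vneg, ∀ W ∈ Vneg, ⁅U, W⁆ = 0 := by
    subst hVneg
    refine fun U hU W hW => lie_eq_zero_of_mem_iSup_maxGenEigenspace hDC ?_ hU hW
    intro μ ν hμ hν h
    have := congrArg Complex.re h
    simp only [Complex.add_re, Complex.ofReal_re] at this
    linarith
  refine ⟨hVneg_abelian, fun x y hx hy => ?_⟩
  simpa using hVneg_abelian _ hx _ hy

/-- Let `D` be a derivation of the Heisenberg Lie algebra `h_{2p+1}` with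
`D Z = λ·Z`, `λ > 0`. Let `V₋` be the sum of the generalized eigenspaces of the
complexification of `D` for the eigenvalues with negative real part. Then `[U, V] = 0` for all
`U, V ∈ V₋`; in particular `[X, Y] = 0` for `X, Y ∈ m₋ = V₋ ∩ h_{2p+1}`. -/
theorem heisenberg_neg_part_abelian
    (L : Type*) [LieRing L] [LieAlgebra ℝ L]
    (p : ℕ) (hp : 1 ≤ p) (Xb : Fin (2 * p) → L) (Zb : L)
    (hindep : LinearIndependent ℝ (Sum.elim Xb (fun _ : Unit => Zb)))
    (hspan : Submodule.span ℝ (Set.range (Sum.elim Xb (fun _ : Unit => Zb))) = ⊤)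
    (hbr : ∀ i j : Fin (2 * p), ⁅Xb i, Xb j⁆ =
      if (j : ℕ) = (i : ℕ) + p then Zb else if (i : ℕ) = (j : ℕ) + p then -Zb else 0)
    (hXZ : ∀ i, ⁅Xb i, Zb⁆ = 0)
    (D : LieDerivation ℝ L L) (lam : ℝ) (hDZ : D Zb = lam • Zb) (hlam : 0 < lam)
    (Vneg : Submodule ℂ (ℂ ⊗[ℝ] L))
    (hVneg : Vneg = ⨆ μ : {μ : ℂ // μ.re < 0},
      Module.End.maxGenEigenspace (LinearMap.baseChange ℂ D.toLinearMap) μ.1) :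
    (∀ U ∈ Vneg, ∀ W ∈ Vneg, ⁅U, W⁆ = 0) ∧
      (∀ x y : L, (1 : ℂ) ⊗ₜ[ℝ] x ∈ Vneg → (1 : ℂ) ⊗ₜ[ℝ] y ∈ Vneg → ⁅x, y⁆ = 0) :=
  heisenberg_neg_part_abelian_general L p Xb Zb hspan hbr hXZ D lam hDZ hlam Vneg hVneg
end

section
/- Let (m, ⟨·,·⟩) be a finite-dimensional real inner product space, K a skew-symmetric endomorphism of m (⟨Kx,y⟩ = −⟨x,Ky⟩ for all x,y), and W ⊆ m a subspace such that ⟨Kx, y⟩ = 0 for all x, y ∈ W. Let π_W denote the orthogonal projection of m onto W. Then Tr(Kᵀ K π_W) ≤ (1/2)·Tr(Kᵀ K), where Kᵀ is the adjoint of K with respect to ⟨·,·⟩. -/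
open scoped RealInnerProductSpace

/-!
An isotropic `W` is mapped by `K` into `Wᗮ`. For orthonormal bases `(eᵢ)` of `W` and `(fⱼ)` of
`Wᗮ`, Parseval in `Wᗮ`, skew-symmetry and Bessel's inequality give
`Tr(KᵀKπ_W) = ∑ᵢ ‖Keᵢ‖² = ∑ᵢⱼ ⟪Keᵢ, fⱼ⟫² = ∑ⱼᵢ ⟪eᵢ, Kfⱼ⟫² ≤ ∑ⱼ ‖Kfⱼ‖² = Tr(KᵀKπ_Wᗮ)`,
and the two traces add up to `Tr(KᵀK)`.
-/

namespace Submodule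

theorem trace_comp_starProjection {𝕜 E ι : Type*} [RCLike 𝕜] [NormedAddCommGroup E]
    [InnerProductSpace 𝕜 E] [FiniteDimensional 𝕜 E] [Fintype ι] (U : Submodule 𝕜 E)
    (T : E →ₗ[𝕜] E) (b : OrthonormalBasis ι 𝕜 U) :
    LinearMap.trace 𝕜 E (T ∘ₗ U.starProjection.toLinearMap)
      = ∑ i, inner 𝕜 (b i : E) (T (b i)) := by
  change LinearMap.trace 𝕜 E ((T ∘ₗ U.subtype) ∘ₗ U.orthogonalProjectionOnto.toLinearMap) = _
  rw [LinearMap.trace_comp_comm', LinearMap.trace_eq_sum_inner _ b]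
  simp

theorem trace_adjoint_comp_self_comp_starProjection {E ι : Type*} [NormedAddCommGroup E]
    [InnerProductSpace ℝ E] [FiniteDimensional ℝ E] [Fintype ι] (U : Submodule ℝ E)
    (K : E →ₗ[ℝ] E) (b : OrthonormalBasis ι ℝ U) :
    LinearMap.trace ℝ E (LinearMap.adjoint K ∘ₗ K ∘ₗ U.starProjection.toLinearMap)
      = ∑ i, ‖K (b i)‖ ^ 2 := by
  rw [← LinearMap.comp_assoc, U.trace_comp_starProjection _ b]
  simp [LinearMap.adjoint_inner_right]

end Submodule

theorem sum_norm_sq_apply_le_of_isotropic {E ι κ : Type*} [NormedAddCommGroup E]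
    [InnerProductSpace ℝ E] [Fintype ι] [Fintype κ] (K : E →ₗ[ℝ] E)
    (hK : ∀ x y : E, ⟪K x, y⟫ = - ⟪x, K y⟫)
    (W : Submodule ℝ E) (hW : ∀ x ∈ W, ∀ y ∈ W, ⟪K x, y⟫ = 0)
    (e : OrthonormalBasis ι ℝ W) (f : OrthonormalBasis κ ℝ Wᗮ) :
    ∑ i, ‖K (e i)‖ ^ 2 ≤ ∑ j, ‖K (f j)‖ ^ 2 := by
  have hKW : ∀ x ∈ W, K x ∈ Wᗮ := fun x hx =>
    (Submodule.mem_orthogonal' W _).2 fun y hy => hW x hx y hy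
  calc ∑ i, ‖K (e i)‖ ^ 2 = ∑ i, ∑ j, ⟪(f j : E), K (e i)⟫ ^ 2 :=
        Fintype.sum_congr _ _ fun i => (f.sum_sq_inner_right ⟨K (e i), hKW _ (e i).2⟩).symm
    _ = ∑ j, ∑ i, ⟪(e i : E), K (f j)⟫ ^ 2 := by
        have hswap : ∀ x y : E, ⟪x, K y⟫ ^ 2 = ⟪y, K x⟫ ^ 2 := fun x y => by
          rw [real_inner_comm (K y) x, hK, neg_sq]
        simp_rw [hswap (f _), Finset.sum_comm (γ := ι)]
    _ ≤ ∑ j, ‖K (f j)‖ ^ 2 := by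
        refine Finset.sum_le_sum fun j _ => ?_
        simpa using (e.orthonormal.comp_linearIsometry W.subtypeₗᵢ).sum_inner_products_le
          (K (f j)) (s := Finset.univ)

/-- Let `K` be a skew-symmetric endomorphism of a finite-dimensional real
inner product space `m` and `W ⊆ m` a subspace with `⟨Kx, y⟩ = 0` for all `x, y ∈ W`. Then
`Tr(Kᵀ K π_W) ≤ (1/2)·Tr(Kᵀ K)`. -/
theorem trace_skew_proj_le
    (m : Type*) [NormedAddCommGroup m] [InnerProductSpace ℝ m] [FiniteDimensional ℝ m]
    (K : m →ₗ[ℝ] m) (hK : ∀ x y : m, ⟪K x, y⟫ = - ⟪x, K y⟫)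
    (W : Submodule ℝ m) (hW : ∀ x ∈ W, ∀ y ∈ W, ⟪K x, y⟫ = 0) :
    LinearMap.trace ℝ m
        ((LinearMap.adjoint K) ∘ₗ K ∘ₗ (W.subtype ∘ₗ (W.orthogonalProjection).toLinearMap))
      ≤ (1/2) * LinearMap.trace ℝ m ((LinearMap.adjoint K) ∘ₗ K) := by
  let e := stdOrthonormalBasis ℝ W
  let f := stdOrthonormalBasis ℝ Wᗮ
  have hsplit : LinearMap.adjoint K ∘ₗ K = LinearMap.adjoint K ∘ₗ K ∘ₗ W.starProjection.toLinearMap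
      + LinearMap.adjoint K ∘ₗ K ∘ₗ Wᗮ.starProjection.toLinearMap := by
    ext x
    simp
  change LinearMap.trace ℝ m (LinearMap.adjoint K ∘ₗ K ∘ₗ W.starProjection.toLinearMap) ≤ _
  rw [hsplit, map_add, W.trace_adjoint_comp_self_comp_starProjection K e,
    Wᗮ.trace_adjoint_comp_self_comp_starProjection K f]
  linarith [sum_norm_sq_apply_le_of_isotropic K hK W hW e f]
end

section
/- Let (V, ⟨·,·⟩) be a finite-dimensional real inner product space, e ∈ V a unit vector, and m = e^⊥. Let A be an endomorphism of V with A(e) = λ·e for some λ ∈ ℝ, and write, for x ∈ m, A(x) = N(x) + ⟨v, x⟩·e with N an endomorphism of m and v ∈ m. Let W ⊆ m be a subspace invariant under N and π_W the orthogonal projection of V onto W. Then Tr([A, Aᵀ] π_W) ≥ −‖π_W v‖², where Aᵀ is the adjoint of A and [A, Aᵀ] = A Aᵀ − Aᵀ A. -/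
/-!
Write `π` for the orthogonal projection onto `W` and `(wᵢ)` for an orthonormal basis of `W`.
Then `Tr([A, Aᵀ] π) = ∑ᵢ ‖Aᵀ wᵢ‖² - ‖A wᵢ‖²`. Since `∑ᵢ ‖π Aᵀ wᵢ‖² = ∑ᵢⱼ ⟨wⱼ, Aᵀ wᵢ⟩² = ∑ⱼ ‖π A wⱼ‖²`
and `‖A wⱼ‖² = ‖π A wⱼ‖² + ‖(1 - π) A wⱼ‖²`, this trace is at least `-∑ⱼ ‖(1 - π) A wⱼ‖²`, for
any operator `A`. Under the hypotheses, `N` preserves `W` and `e ⊥ W`, so `(1 - π) A wⱼ = ⟨v, wⱼ⟩ e`,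
and `∑ⱼ ⟨v, wⱼ⟩² = ‖π v‖²`.
-/

open scoped InnerProductSpace RealInnerProductSpace

namespace Submodule

variable {V : Type*} [NormedAddCommGroup V] [InnerProductSpace ℝ V]
  (W : Submodule ℝ V) [W.HasOrthogonalProjection] {ι : Type*} [Fintype ι]

theorem norm_sq_orthogonalProjectionOnto_eq_sum (b : OrthonormalBasis ι ℝ W) (x : V) :
    ‖W.orthogonalProjectionOnto x‖ ^ 2 = ∑ i, ⟪(b i : V), x⟫ ^ 2 := by
  simp only [← b.sum_sq_inner_right, inner_orthogonalProjectionOnto_eq_of_mem_left]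

theorem sum_norm_sq_orthogonalProjectionOnto_adjoint [FiniteDimensional ℝ V]
    (A : V →ₗ[ℝ] V) (b : OrthonormalBasis ι ℝ W) :
    ∑ i, ‖W.orthogonalProjectionOnto (LinearMap.adjoint A (b i))‖ ^ 2 =
      ∑ i, ‖W.orthogonalProjectionOnto (A (b i))‖ ^ 2 := by
  simp only [W.norm_sq_orthogonalProjectionOnto_eq_sum b, LinearMap.adjoint_inner_right]
  rw [Finset.sum_comm]
  simp only [real_inner_comm]

end Submodule

namespace LinearMap

theorem trace_comp_starProjection_eq_sum_inner {𝕜 E : Type*} [RCLike 𝕜] [NormedAddCommGroup E]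
    [InnerProductSpace 𝕜 E] [FiniteDimensional 𝕜 E] (T : E →ₗ[𝕜] E) (W : Submodule 𝕜 E)
    {ι : Type*} [Fintype ι] (b : OrthonormalBasis ι 𝕜 W) :
    trace 𝕜 E (T ∘ₗ (W.subtype ∘ₗ W.orthogonalProjectionOnto.toLinearMap)) =
      ∑ i, ⟪(b i : E), T (b i)⟫_𝕜 := by
  rw [← comp_assoc, trace_comp_comm', trace_eq_sum_inner _ b]
  simp only [comp_apply, ContinuousLinearMap.coe_coe, Submodule.coe_subtype,
    Submodule.inner_orthogonalProjectionOnto_eq_of_mem_left]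

variable {V : Type*} [NormedAddCommGroup V] [InnerProductSpace ℝ V] [FiniteDimensional ℝ V]

theorem inner_commutator_adjoint_self (A : V →ₗ[ℝ] V) (x : V) :
    ⟪x, (A ∘ₗ adjoint A - adjoint A ∘ₗ A) x⟫ = ‖adjoint A x‖ ^ 2 - ‖A x‖ ^ 2 := by
  have hAAdj : ⟪x, A (adjoint A x)⟫ = ‖adjoint A x‖ ^ 2 := by
    rw [← adjoint_inner_left, real_inner_self_eq_norm_sq]
  have hAdjA : ⟪x, adjoint A (A x)⟫ = ‖A x‖ ^ 2 := by
    rw [adjoint_inner_right, real_inner_self_eq_norm_sq]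
  rw [sub_apply, inner_sub_right, comp_apply, comp_apply, hAAdj, hAdjA]

theorem neg_sum_norm_sq_orthogonalProjectionOnto_orthogonal_le_trace (A : V →ₗ[ℝ] V)
    (W : Submodule ℝ V) {ι : Type*} [Fintype ι] (b : OrthonormalBasis ι ℝ W) :
    -∑ i, ‖Wᗮ.orthogonalProjectionOnto (A (b i))‖ ^ 2 ≤
      trace ℝ V ((A ∘ₗ adjoint A - adjoint A ∘ₗ A) ∘ₗ
        (W.subtype ∘ₗ W.orthogonalProjectionOnto.toLinearMap)) := by
  have hAdj : ∑ i, ‖W.orthogonalProjectionOnto (A (b i))‖ ^ 2 ≤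
      ∑ i, ‖adjoint A (b i)‖ ^ 2 := by
    rw [← W.sum_norm_sq_orthogonalProjectionOnto_adjoint A b]
    gcongr
    exact W.norm_orthogonalProjectionOnto_apply_le _
  have hA : ∑ i, ‖A (b i)‖ ^ 2 = ∑ i, ‖W.orthogonalProjectionOnto (A (b i))‖ ^ 2 +
      ∑ i, ‖Wᗮ.orthogonalProjectionOnto (A (b i))‖ ^ 2 := by
    rw [← Finset.sum_add_distrib]
    exact Finset.sum_congr rfl fun i _ ↦ Submodule.norm_sq_eq_add_norm_sq_projection _ W
  rw [trace_comp_starProjection_eq_sum_inner _ W b]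
  simp only [inner_commutator_adjoint_self, Finset.sum_sub_distrib]
  linarith

end LinearMap

theorem trace_commutator_adjoint_proj_ge_general
    (V : Type*) [NormedAddCommGroup V] [InnerProductSpace ℝ V] [FiniteDimensional ℝ V]
    (e : V) (he : ‖e‖ = 1)
    (m : Submodule ℝ V) (hm : m = (Submodule.span ℝ ({e} : Set V))ᗮ)
    (A : V →ₗ[ℝ] V)
    (N : m →ₗ[ℝ] m) (v : V)
    (hdec : ∀ x : m, A x = (N x : V) + ⟪v, (x : V)⟫ • e)
    (W : Submodule ℝ V) (hWm : W ≤ m)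
    (hWinv : ∀ x : m, (x : V) ∈ W → (N x : V) ∈ W) :
    - ‖((Submodule.orthogonalProjectionOnto W v : W) : V)‖ ^ 2 ≤
      LinearMap.trace ℝ V
        ((A ∘ₗ (LinearMap.adjoint A) - (LinearMap.adjoint A) ∘ₗ A) ∘ₗ
          (W.subtype ∘ₗ (Submodule.orthogonalProjectionOnto W).toLinearMap)) := by
  let b := stdOrthonormalBasis ℝ W
  have he_perp : e ∈ Wᗮ := by
    refine Submodule.orthogonal_le hWm ?_
    rw [hm]
    exact Submodule.le_orthogonal_orthogonal _ (Submodule.mem_span_singleton_self e)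
  have hA_perp (i) : ‖Wᗮ.orthogonalProjectionOnto (A (b i))‖ ^ 2 = ⟪(b i : V), v⟫ ^ 2 := by
    let x : m := ⟨b i, hWm (b i).2⟩
    have hNx : (N x : V) ∈ W := hWinv x (b i).2
    have hproj : Wᗮ.starProjection (A x) = ⟪v, (x : V)⟫ • e :=
      Wᗮ.eq_starProjection_of_mem_orthogonal' (Wᗮ.smul_mem _ he_perp)
        (W.le_orthogonal_orthogonal hNx) ((hdec x).trans (add_comm _ _))
    change ‖Wᗮ.starProjection (A x)‖ ^ 2 = _
    rw [hproj, norm_smul, he, mul_one, Real.norm_eq_abs, sq_abs, real_inner_comm]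
  calc -‖((W.orthogonalProjectionOnto v : W) : V)‖ ^ 2
      = -∑ i, ‖Wᗮ.orthogonalProjectionOnto (A (b i))‖ ^ 2 := by
        simp only [hA_perp, ← W.norm_sq_orthogonalProjectionOnto_eq_sum b]
        rfl
    _ ≤ _ := LinearMap.neg_sum_norm_sq_orthogonalProjectionOnto_orthogonal_le_trace A W b

/-- Let `(V, ⟨·,·⟩)` be a finite-dimensional real inner product space,
`e` a unit vector, `m = e^⊥`, and `A` an endomorphism with `A e = λ·e` and
`A x = N x + ⟨v, x⟩·e` for `x ∈ m`, where `N` is an endomorphism of `m` and `v ∈ m`. If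
`W ⊆ m` is an `N`-invariant subspace and `π_W` the orthogonal projection onto `W`, then
`Tr([A, Aᵀ] π_W) ≥ -‖π_W v‖²`. -/
theorem trace_commutator_adjoint_proj_ge
    (V : Type*) [NormedAddCommGroup V] [InnerProductSpace ℝ V] [FiniteDimensional ℝ V]
    (e : V) (he : ‖e‖ = 1)
    (m : Submodule ℝ V) (hm : m = (Submodule.span ℝ ({e} : Set V))ᗮ)
    (A : V →ₗ[ℝ] V) (lam : ℝ) (hAe : A e = lam • e)
    (N : m →ₗ[ℝ] m) (v : V) (hv : v ∈ m)
    (hdec : ∀ x : m, A x = (N x : V) + ⟪v, (x : V)⟫ • e)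
    (W : Submodule ℝ V) (hWm : W ≤ m)
    (hWinv : ∀ x : m, (x : V) ∈ W → (N x : V) ∈ W) :
    - ‖((Submodule.orthogonalProjectionOnto W v : W) : V)‖ ^ 2 ≤
      LinearMap.trace ℝ V
        ((A ∘ₗ (LinearMap.adjoint A) - (LinearMap.adjoint A) ∘ₗ A) ∘ₗ
          (W.subtype ∘ₗ (Submodule.orthogonalProjectionOnto W).toLinearMap)) :=
  trace_commutator_adjoint_proj_ge_general V e he m hm A N v hdec W hWm hWinv
end

section
/- Let l ≥ 4 and let D be any derivation of the standard filiform Lie algebra L_l. Then there exist a, d ∈ ℝ such that D X_1 ∈ a·X_1 + span(X_2,…,X_l), D X_2 ∈ d·X_2 + span(X_3,…,X_l), and D X_i ∈ ((i−2)·a + d)·X_i + span(X_{i+1},…,X_l) for i = 3,…,l (with span of the empty set equal to 0 when i = l). In particular, D(span(X_2,…,X_l)) ⊆ span(X_2,…,X_l) and D(ℝ·X_l) ⊆ ℝ·X_l. -/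
/-!
Write `D X_j = c_j X_1 + y_j` with `y_j` in the abelian ideal `I = span(X_2, …, X_l)`. The Leibniz
rule applied to `[X_2, X_j] = 0` gives `c_2 [X_1, X_j] = c_j X_3`; for `j = 3` linear independence
of `X_3, X_4` forces `c_2 = 0`, and then `c_j = 0` for every `j ≥ 2`, i.e. `D I ⊆ I`. Hence
`D X_1 ≡ a X_1 (mod I)` and `D X_2 ≡ d X_2 (mod span(X_3, …, X_l))`, and the Leibniz rule applied
to `X_{i+1} = [X_1, X_i]` turns the diagonal entry `(i-2) a + d` of `X_i` into `a + (i-2) a + d`,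
because `ad X_1` maps `span(X_k, …, X_l)` into `span(X_{k+1}, …, X_l)`.
-/

open Submodule Set

section TailSpan

variable (R : Type*) {M : Type*} [Semiring R] [AddCommMonoid M] [Module R M] {l : ℕ}

/-- In the paper's numbering `X_{k+1} = Xb k`, `tailSpan R Xb k = span(X_{k+1}, …, X_l)`. -/
def tailSpan (v : Fin l → M) (k : ℕ) : Submodule R M :=
  span R (v '' {j | k ≤ (j : ℕ)})

variable {R} (v : Fin l → M)

theorem tailSpan_zero : tailSpan R v 0 = span R (range v) := by
  simp [tailSpan, image_univ]

theorem tailSpan_antitone : Antitone (tailSpan R v) := fun _ _ hkm =>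
  span_mono (image_mono fun _ hj => le_trans hkm hj)

theorem tailSpan_eq_bot {k : ℕ} (hk : l ≤ k) : tailSpan R v k = ⊥ := by
  have : {j : Fin l | k ≤ (j : ℕ)} = ∅ :=
    eq_empty_of_forall_notMem fun j (hj : k ≤ (j : ℕ)) => by have := j.isLt; omega
  simp [tailSpan, this]

theorem tailSpan_eq_sup {k : ℕ} (hk : k < l) :
    tailSpan R v k = R ∙ v ⟨k, hk⟩ ⊔ tailSpan R v (k + 1) := by
  have : {j : Fin l | k ≤ (j : ℕ)} = {⟨k, hk⟩} ∪ {j : Fin l | k + 1 ≤ (j : ℕ)} := by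
    ext j; simp only [mem_ofPred_eq, mem_union, mem_singleton_iff, Fin.ext_iff]; omega
  rw [tailSpan, this, image_union, span_union, image_singleton, tailSpan]

theorem exists_sub_smul_mem_tailSpan_succ {R M : Type*} [Ring R] [AddCommGroup M]
    [Module R M] {v : Fin l → M} {k : ℕ} (hk : k < l) {x : M} (hx : x ∈ tailSpan R v k) :
    ∃ c : R, x - c • v ⟨k, hk⟩ ∈ tailSpan R v (k + 1) := by
  rw [tailSpan_eq_sup v hk, mem_sup] at hx
  obtain ⟨_, hy, z, hz, rfl⟩ := hx
  obtain ⟨c, rfl⟩ := mem_span_singleton.1 hy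
  exact ⟨c, by simpa using hz⟩

end TailSpan

section Lie

variable {R L : Type*} [CommRing R] [LieRing L] [LieAlgebra R L]

theorem lie_eq_zero_of_mem_span {s : Set L} (hs : ∀ x ∈ s, ∀ y ∈ s, ⁅x, y⁆ = 0) {x y : L}
    (hx : x ∈ span R s) (hy : y ∈ span R s) : ⁅x, y⁆ = 0 := by
  induction hx, hy using span_induction₂ with
  | mem_mem x y hx hy => exact hs x hx y hy
  | zero_left => exact zero_lie _
  | zero_right => exact lie_zero _
  | add_left _ _ _ _ _ _ h₁ h₂ => rw [add_lie, h₁, h₂, add_zero]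
  | add_right _ _ _ _ _ _ h₁ h₂ => rw [lie_add, h₁, h₂, add_zero]
  | smul_left _ _ _ _ _ h => rw [smul_lie, h, smul_zero]
  | smul_right _ _ _ _ _ h => rw [lie_smul, h, smul_zero]

/-- Leibniz rule applied to `⁅x, y⁆ = 0` inside an abelian subspace, modulo that subspace. -/
theorem LieDerivation.smul_lie_eq_smul_lie {I : Submodule R L}
    (hI : ∀ x ∈ I, ∀ y ∈ I, ⁅x, y⁆ = 0) (D : LieDerivation R L L) {z x y : L} {a b : R}
    (hx : x ∈ I) (hy : y ∈ I) (hDx : D x - a • z ∈ I) (hDy : D y - b • z ∈ I) :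
    a • ⁅z, y⁆ = b • ⁅z, x⁆ := by
  have hleft : ⁅D x, y⁆ = a • ⁅z, y⁆ := by
    simpa [sub_lie, sub_eq_zero] using hI _ hDx y hy
  have hright : ⁅x, D y⁆ = -(b • ⁅z, x⁆) := by
    have := hI x hx _ hDy
    rwa [lie_sub, lie_smul, sub_eq_zero, ← lie_skew x z, smul_neg] at this
  have hleib := D.apply_lie_eq_add x y
  rw [hI x hx y hy, map_zero, hleft, hright] at hleib
  exact (neg_add_eq_zero.1 hleib.symm).symm

variable {l : ℕ} {Xb : Fin l → L}

theorem lie_mem_tailSpan_succ {x y : L} {k : ℕ}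
    (hx : ∀ j : Fin l, k ≤ (j : ℕ) → ⁅x, Xb j⁆ ∈ tailSpan R Xb (j + 1))
    (hy : y ∈ tailSpan R Xb k) : ⁅x, y⁆ ∈ tailSpan R Xb (k + 1) := by
  have : tailSpan R Xb k ≤ (tailSpan R Xb (k + 1)).comap (LieModule.toEnd R L L x) :=
    span_le.2 <| by
      rintro _ ⟨j, hj, rfl⟩
      exact tailSpan_antitone Xb (Nat.succ_le_succ hj) (hx j hj)
  exact this hy

end Lie

section Filiform

variable {R L : Type*} [CommRing R] [LieRing L] [LieAlgebra R L] {l : ℕ} {Xb : Fin l → L}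

theorem lie_generator_mem_tailSpan_succ (h0 : 0 < l)
    (hbr : ∀ i : Fin l, ∀ hi : (i : ℕ) + 1 < l, 1 ≤ (i : ℕ) →
      ⁅Xb ⟨0, h0⟩, Xb i⁆ = Xb ⟨(i : ℕ) + 1, hi⟩)
    (hbrlast : ⁅Xb ⟨0, h0⟩, Xb ⟨l - 1, by omega⟩⁆ = 0)
    (j : Fin l) (hj : 1 ≤ (j : ℕ)) : ⁅Xb ⟨0, h0⟩, Xb j⁆ ∈ tailSpan R Xb (j + 1) := by
  by_cases hjl : (j : ℕ) + 1 < l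
  · rw [hbr j hjl hj]
    exact subset_span ⟨⟨j + 1, hjl⟩, le_rfl (a := (j : ℕ) + 1), rfl⟩
  · have hlast : j = ⟨l - 1, by omega⟩ := Fin.ext (by simp only; omega)
    rw [hlast, hbrlast]
    exact zero_mem _

theorem lie_eq_zero_of_mem_tailSpan_one
    (hab : ∀ i j : Fin l, 1 ≤ (i : ℕ) → 1 ≤ (j : ℕ) → ⁅Xb i, Xb j⁆ = 0) {x y : L}
    (hx : x ∈ tailSpan R Xb 1) (hy : y ∈ tailSpan R Xb 1) : ⁅x, y⁆ = 0 :=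
  lie_eq_zero_of_mem_span (by rintro _ ⟨i, hi, rfl⟩ _ ⟨j, hj, rfl⟩; exact hab i j hi hj) hx hy

theorem exists_sub_smul_mem_tailSpan_one (h0 : 0 < l) (hspan : span R (range Xb) = ⊤)
    (x : L) : ∃ c : R, x - c • Xb ⟨0, h0⟩ ∈ tailSpan R Xb 1 :=
  exists_sub_smul_mem_tailSpan_succ h0 (by rw [tailSpan_zero, hspan]; exact mem_top)

theorem derivation_apply_generator_mem_tailSpan_one (hl : 3 < l)
    (hindep : LinearIndependent R Xb) (hspan : span R (range Xb) = ⊤)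
    (hbr : ∀ i : Fin l, ∀ hi : (i : ℕ) + 1 < l, 1 ≤ (i : ℕ) →
      ⁅Xb ⟨0, by omega⟩, Xb i⁆ = Xb ⟨(i : ℕ) + 1, hi⟩)
    (hab : ∀ i j : Fin l, 1 ≤ (i : ℕ) → 1 ≤ (j : ℕ) → ⁅Xb i, Xb j⁆ = 0)
    (D : LieDerivation R L L) {j : Fin l} (hj : 1 ≤ (j : ℕ)) :
    D (Xb j) ∈ tailSpan R Xb 1 := by
  have hmem : ∀ i : Fin l, 1 ≤ (i : ℕ) → Xb i ∈ tailSpan R Xb 1 :=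
    fun i hi => subset_span ⟨i, hi, rfl⟩
  choose c hc using exists_sub_smul_mem_tailSpan_one (by omega) hspan
  have hpair : ∀ s t : R, s • Xb ⟨2, by omega⟩ + t • Xb ⟨3, by omega⟩ = 0 → s = 0 ∧ t = 0 :=
    (LinearIndepOn.pair_iff Xb (by simp)).1 (hindep.linearIndepOn _)
  -- `c x` is the `X_1`-coordinate of `x` modulo `span(X_2, …, X_l)`.
  have hleib : ∀ i : Fin l, 1 ≤ (i : ℕ) →
      c (D (Xb ⟨1, by omega⟩)) • ⁅Xb ⟨0, by omega⟩, Xb i⁆ = c (D (Xb i)) • Xb ⟨2, by omega⟩ :=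
    fun i hi => by
      rw [← hbr ⟨1, by omega⟩ (by simp; omega) le_rfl]
      exact D.smul_lie_eq_smul_lie (fun _ hx _ hy => lie_eq_zero_of_mem_tailSpan_one hab hx hy)
        (hmem _ le_rfl) (hmem i hi) (hc _) (hc _)
  have hc1 : c (D (Xb ⟨1, by omega⟩)) = 0 := by
    have h := hleib ⟨2, by omega⟩ (by simp)
    rw [hbr ⟨2, by omega⟩ (by simp; omega) (by simp)] at h
    exact (hpair (-c (D (Xb ⟨2, by omega⟩))) _
      (by rw [neg_smul]; exact neg_add_eq_zero.2 h.symm)).2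
  have hcj : c (D (Xb j)) = 0 := by
    have h := hleib j hj
    rw [hc1, zero_smul] at h
    exact (hpair _ 0 (by rw [← h, zero_smul, add_zero])).1
  simpa [hcj] using hc (D (Xb j))

theorem derivation_apply_mem_tailSpan_one (hl : 3 < l) (hindep : LinearIndependent R Xb)
    (hspan : span R (range Xb) = ⊤)
    (hbr : ∀ i : Fin l, ∀ hi : (i : ℕ) + 1 < l, 1 ≤ (i : ℕ) →
      ⁅Xb ⟨0, by omega⟩, Xb i⁆ = Xb ⟨(i : ℕ) + 1, hi⟩)
    (hab : ∀ i j : Fin l, 1 ≤ (i : ℕ) → 1 ≤ (j : ℕ) → ⁅Xb i, Xb j⁆ = 0)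
    (D : LieDerivation R L L) {x : L} (hx : x ∈ tailSpan R Xb 1) :
    D x ∈ tailSpan R Xb 1 := by
  have : tailSpan R Xb 1 ≤ (tailSpan R Xb 1).comap (D : L →ₗ[R] L) := span_le.2 <| by
    rintro _ ⟨j, hj, rfl⟩
    exact derivation_apply_generator_mem_tailSpan_one hl hindep hspan hbr hab D hj
  exact this hx

theorem exists_derivation_apply_sub_smul_mem_tailSpan (hl : 3 < l)
    (hindep : LinearIndependent R Xb) (hspan : span R (range Xb) = ⊤)
    (hbr : ∀ i : Fin l, ∀ hi : (i : ℕ) + 1 < l, 1 ≤ (i : ℕ) →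
      ⁅Xb ⟨0, by omega⟩, Xb i⁆ = Xb ⟨(i : ℕ) + 1, hi⟩)
    (hbrlast : ⁅Xb ⟨0, by omega⟩, Xb ⟨l - 1, by omega⟩⁆ = 0)
    (hab : ∀ i j : Fin l, 1 ≤ (i : ℕ) → 1 ≤ (j : ℕ) → ⁅Xb i, Xb j⁆ = 0)
    (D : LieDerivation R L L) :
    ∃ a d : R, D (Xb ⟨0, by omega⟩) - a • Xb ⟨0, by omega⟩ ∈ tailSpan R Xb 1 ∧
      ∀ n (hn : n + 1 < l),
        D (Xb ⟨n + 1, hn⟩) - ((n : R) * a + d) • Xb ⟨n + 1, hn⟩ ∈ tailSpan R Xb (n + 2) := by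
  obtain ⟨a, ha⟩ := exists_sub_smul_mem_tailSpan_one (by omega) hspan (D (Xb ⟨0, by omega⟩))
  obtain ⟨d, hd⟩ := exists_sub_smul_mem_tailSpan_succ (by omega)
    (derivation_apply_generator_mem_tailSpan_one hl hindep hspan hbr hab D
      (j := ⟨1, by omega⟩) le_rfl)
  refine ⟨a, d, ha, fun n hn => ?_⟩
  induction n with
  | zero => simpa using hd
  | succ n ih =>
    have hbrn := hbr ⟨n + 1, by omega⟩ hn (by simp)
    have hDX0 : ⁅D (Xb ⟨0, by omega⟩), Xb ⟨n + 1, by omega⟩⁆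
        = a • ⁅Xb ⟨0, by omega⟩, Xb ⟨n + 1, by omega⟩⁆ := by
      have := lie_eq_zero_of_mem_tailSpan_one hab ha
        (subset_span ⟨⟨n + 1, by omega⟩, by simp, rfl⟩)
      rwa [sub_lie, smul_lie, sub_eq_zero] at this
    have hstep := lie_mem_tailSpan_succ (x := Xb ⟨0, by omega⟩) (k := n + 2)
      (fun j hj => lie_generator_mem_tailSpan_succ (R := R) (by omega) hbr hbrlast j (by omega))
      (ih (by omega))
    convert hstep using 1
    rw [← hbrn, D.apply_lie_eq_add, hDX0, lie_sub, lie_smul]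
    push_cast
    module

end Filiform

/-- Every derivation `D` of the standard filiform Lie algebra `L_l`
(`l ≥ 4`, basis `X_1, …, X_l`, nonzero brackets `[X_1, X_i] = X_{i+1}` for `2 ≤ i ≤ l-1`)
is lower triangular with diagonal `a, d, a+d, 2a+d, …, (l-2)a+d` for some `a, d ∈ ℝ`:
`D X_1 ∈ a·X_1 + span(X_2, …, X_l)`, `D X_2 ∈ d·X_2 + span(X_3, …, X_l)` and
`D X_i ∈ ((i-2)·a+d)·X_i + span(X_{i+1}, …, X_l)` for `3 ≤ i ≤ l`. In particular `D`
preserves `span(X_2, …, X_l)` and `ℝ·X_l`.  (Here indices are `0`-based: `X_{k+1} = Xb k`.) -/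
theorem derivation_standard_filiform_form
    (L : Type*) [LieRing L] [LieAlgebra ℝ L]
    (l : ℕ) (hl : 4 ≤ l) (Xb : Fin l → L)
    (hindep : LinearIndependent ℝ Xb)
    (hspan : Submodule.span ℝ (Set.range Xb) = ⊤)
    (hbr : ∀ i : Fin l, ∀ hi : (i : ℕ) + 1 < l, 1 ≤ (i : ℕ) →
      ⁅Xb ⟨0, by omega⟩, Xb i⁆ = Xb ⟨(i : ℕ) + 1, hi⟩)
    (hbrlast : ⁅Xb ⟨0, by omega⟩, Xb ⟨l - 1, by omega⟩⁆ = 0)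
    (hab : ∀ i j : Fin l, 1 ≤ (i : ℕ) → 1 ≤ (j : ℕ) → ⁅Xb i, Xb j⁆ = 0)
    (D : LieDerivation ℝ L L) :
    ∃ a d : ℝ,
      (D (Xb ⟨0, by omega⟩) - a • Xb ⟨0, by omega⟩ ∈
        Submodule.span ℝ (Xb '' {i : Fin l | 1 ≤ (i : ℕ)})) ∧
      (D (Xb ⟨1, by omega⟩) - d • Xb ⟨1, by omega⟩ ∈
        Submodule.span ℝ (Xb '' {i : Fin l | 2 ≤ (i : ℕ)})) ∧
      (∀ i : Fin l, 2 ≤ (i : ℕ) →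
        D (Xb i) - ((((i : ℕ) - 1 : ℕ) : ℝ) * a + d) • Xb i ∈
          Submodule.span ℝ (Xb '' {j : Fin l | (i : ℕ) < (j : ℕ)})) ∧
      (∀ x ∈ Submodule.span ℝ (Xb '' {i : Fin l | 1 ≤ (i : ℕ)}),
        D x ∈ Submodule.span ℝ (Xb '' {i : Fin l | 1 ≤ (i : ℕ)})) ∧
      (∀ x ∈ Submodule.span ℝ ({Xb ⟨l - 1, by omega⟩} : Set L),
        D x ∈ Submodule.span ℝ ({Xb ⟨l - 1, by omega⟩} : Set L)) := by
  obtain ⟨a, d, ha, hdiag⟩ :=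
    exists_derivation_apply_sub_smul_mem_tailSpan hl hindep hspan hbr hbrlast hab D
  have hlast : D (Xb ⟨l - 1, by omega⟩) ∈ ℝ ∙ Xb ⟨l - 1, by omega⟩ := by
    have h := hdiag (l - 2) (by omega)
    rw [tailSpan_eq_bot Xb (by omega), mem_bot, sub_eq_zero] at h
    have hidx : (⟨l - 2 + 1, by omega⟩ : Fin l) = ⟨l - 1, by omega⟩ :=
      Fin.ext (by simp only; omega)
    rw [← hidx, h]
    exact smul_mem _ _ (mem_span_singleton_self _)
  refine ⟨a, d, ha, by simpa [tailSpan] using hdiag 0 (by omega), ?_,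
    fun x hx => derivation_apply_mem_tailSpan_one hl hindep hspan hbr hab D hx,
    fun x hx => (span_singleton_le_iff_mem _ ((ℝ ∙ _).comap (D : L →ₗ[ℝ] L))).2 hlast hx⟩
  rintro ⟨_ | n, hn⟩ hi
  · simp at hi
  · have h : _ ∈ span ℝ (Xb '' {j : Fin l | n + 1 < (j : ℕ)}) := hdiag n hn
    simpa using h
end
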